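/- arXiv:1705.07277 — 2 statements merged into one kernel-verified Lean document; each statement's English description precedes it below -/
import Mathlib

section
/- Let β > 1. Suppose w₁⋯wₙ is admissible and wₙ ≠ 0. Then for any digit wₙ′ with wₙ′ < wₙ, the word w₁⋯w_{n−1}wₙ′ is full. -/
noncomputable def Tb (β x : ℝ) : ℝ := β * x - ⌊β * x⌋

/-- The (i+1)-th digit of the β-expansion of x (0-indexed). -/
noncomputable def dig (β x : ℝ) (i : ℕ) : ℕ := (⌊β * (Tb β)^[i] x⌋).toNat

/-- w is an admissible word for base β. -/
def Adm (β : ℝ) (w : List ℕ) : Prop :=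
  ∃ x, x ∈ Set.Ico (0:ℝ) 1 ∧ ∀ i (h : i < w.length), w[i] = dig β x i

/-- u is an admissible digit sequence for base β. -/
def AdmSeq (β : ℝ) (u : ℕ → ℕ) : Prop :=
  ∃ x, x ∈ Set.Ico (0:ℝ) 1 ∧ ∀ i, u i = dig β x i

/-- The cylinder I(w) ⊆ [0,1). -/
def cyl (β : ℝ) (w : List ℕ) : Set ℝ :=
  {x | x ∈ Set.Ico (0:ℝ) 1 ∧ ∀ i (h : i < w.length), w[i] = dig β x i}

/-- w is a full word: T_β^{|w|} maps I(w) onto [0,1). -/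
def Full (β : ℝ) (w : List ℕ) : Prop :=
  (Tb β)^[w.length] '' cyl β w = Set.Ico 0 1

/-- The β-expansion of 1 is finite with length M. -/
def FiniteLen (β : ℝ) (M : ℕ) : Prop :=
  0 < M ∧ dig β 1 (M-1) ≠ 0 ∧ ∀ j, M ≤ j → dig β 1 j = 0

open Classical in
/-- The (i+1)-th digit of the modified β-expansion ε*(1,β) (0-indexed). -/
noncomputable def modExp (β : ℝ) (i : ℕ) : ℕ :=
  if h : ∃ M, FiniteLen β M then
    (if (i+1) % (Nat.find h) = 0 then dig β 1 (Nat.find h - 1) - 1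
     else dig β 1 (i % Nat.find h))
  else dig β 1 i

/-- View a finite word as the sequence w0^∞. -/
def wordSeq (w : List ℕ) (i : ℕ) : ℕ := w.getD i 0

/-- Strict lexicographic order on sequences. -/
def seqLt (u v : ℕ → ℕ) : Prop := ∃ k, (∀ i, i < k → u i = v i) ∧ u k < v k

/-- Strict lexicographic order on finite words (identified with w0^∞). -/
def wlt (u v : List ℕ) : Prop := seqLt (wordSeq u) (wordSeq v)

/-- Concatenation of a finite word with a sequence. -/
def catSeq (w : List ℕ) (u : ℕ → ℕ) (i : ℕ) : ℕ :=
  if h : i < w.length then w[i] else u (i - w.length)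

open Classical in
/-- The largest position k ≤ s with ε_k ≠ 0 (greedy step). -/
noncomputable def greedyStep (β : ℝ) (s : ℕ) : ℕ :=
  Nat.findGreatest (fun k => 1 ≤ k ∧ dig β 1 (k-1) ≠ 0) s

/-- τ_β(s): number of terms in the greedy representation of s by nonzero positions. -/
noncomputable def tau (β : ℝ) : ℕ → ℕ
  | 0 => 0
  | s + 1 => tau β (s - (greedyStep β (s+1) - 1)) + 1
decreasing_by omega

open Classical in
/-- r_s(β): maximal length of a string of 0's in ε₁*⋯ε_s*. -/
noncomputable def rrun (β : ℝ) (s : ℕ) : ℕ :=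
  Nat.findGreatest (fun k => 1 ≤ k ∧ ∃ i, i + k ≤ s ∧ ∀ t, t < k → modExp β (i + t) = 0) s

/-- v is the immediate successor of u in the lexicographic order on Σ_β^n. -/
def SuccIn (β : ℝ) (n : ℕ) (u v : List ℕ) : Prop :=
  u.length = n ∧ v.length = n ∧ Adm β u ∧ Adm β v ∧ wlt u v ∧
  ¬ ∃ z : List ℕ, z.length = n ∧ Adm β z ∧ wlt u z ∧ wlt z v

/-- There is a run of l consecutive non-full words in Σ_β^n. -/
def NonFullRun (β : ℝ) (n l : ℕ) : Prop :=
  ∃ f : ℕ → List ℕ,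
    (∀ j, j < l → (f j).length = n ∧ Adm β (f j) ∧ ¬ Full β (f j)) ∧
    (∀ j, j + 1 < l → SuccIn β n (f j) (f (j+1)))

/-- There is a maximal run of l consecutive non-full words in Σ_β^n. -/
def MaxNonFullRun (β : ℝ) (n l : ℕ) : Prop :=
  0 < l ∧ ∃ f : ℕ → List ℕ,
    (∀ j, j < l → (f j).length = n ∧ Adm β (f j) ∧ ¬ Full β (f j)) ∧
    (∀ j, j + 1 < l → SuccIn β n (f j) (f (j+1))) ∧
    (∀ u, SuccIn β n u (f 0) → Full β u) ∧
    (∀ u, SuccIn β n (f (l-1)) u → Full β u)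

/-- There is a maximal run of l consecutive full words in Σ_β^n. -/
def MaxFullRun (β : ℝ) (n l : ℕ) : Prop :=
  0 < l ∧ ∃ f : ℕ → List ℕ,
    (∀ j, j < l → (f j).length = n ∧ Adm β (f j) ∧ Full β (f j)) ∧
    (∀ j, j + 1 < l → SuccIn β n (f j) (f (j+1))) ∧
    (∀ u, SuccIn β n u (f 0) → ¬ Full β u) ∧
    (∀ u, SuccIn β n (f (l-1)) u → ¬ Full β u)

/-- The canonical decomposition of an admissible word, as in the structure theorem:
p.1 is the list of block lengths k₁,…,k_p and p.2 is the final length l. -/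
def Decomp (β : ℝ) (w : List ℕ) (p : List ℕ × ℕ) : Prop :=
  1 ≤ p.2 ∧ (∀ k ∈ p.1, 1 ≤ k) ∧ p.1.sum + p.2 = w.length ∧
  (∀ j, j < p.1.length →
    (∀ t, t < p.1.getD j 0 - 1 → w.getD ((p.1.take j).sum + t) 0 = dig β 1 t) ∧
    w.getD ((p.1.take j).sum + (p.1.getD j 0 - 1)) 0 < dig β 1 (p.1.getD j 0 - 1)) ∧
  (∀ t, t < p.2 - 1 → w.getD (p.1.sum + t) 0 = dig β 1 t) ∧
  w.getD (p.1.sum + (p.2 - 1)) 0 ≤ dig β 1 (p.2 - 1)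

/-! Let `y` lie in the cylinder of `w = u b`. Given `t ∈ [0,1)`, the point `x` with digits `u a`
followed by `t` exists as soon as every tail of `x` stays below `1`; and comparing `x` with `y`
from the last digit backwards, `a < b` makes each tail of `x` strictly smaller than the
corresponding tail `(Tb β)^[k] y < 1` of `y`. -/

lemma Tb_mem_Ico (β x : ℝ) : Tb β x ∈ Set.Ico (0:ℝ) 1 :=
  ⟨sub_nonneg.2 (Int.floor_le _), sub_lt_iff_lt_add'.2 (Int.lt_floor_add_one _)⟩

lemma dig_succ (β x : ℝ) (i : ℕ) : dig β x (i + 1) = dig β (Tb β x) i := by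
  simp only [dig, Function.iterate_succ_apply]

lemma mem_cyl_cons {β x : ℝ} {d : ℕ} {u : List ℕ} :
    x ∈ cyl β (d :: u) ↔ x ∈ Set.Ico (0:ℝ) 1 ∧ dig β x 0 = d ∧ Tb β x ∈ cyl β u := by
  simp only [cyl, Set.mem_ofPred_eq, List.length_cons, Tb_mem_Ico, true_and]
  constructor
  · rintro ⟨hx, h⟩
    exact ⟨hx, (h 0 (by omega)).symm, fun i hi => by
      rw [← dig_succ]; exact h (i + 1) (by omega)⟩
  · rintro ⟨hx, h0, h⟩
    refine ⟨hx, fun i hi => ?_⟩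
    cases i with
    | zero => exact h0.symm
    | succ i => rw [dig_succ]; exact h i (by omega)

lemma iterate_mem_cyl_drop {β x : ℝ} {w : List ℕ} (hx : x ∈ cyl β w) (k : ℕ) :
    (Tb β)^[k] x ∈ cyl β (w.drop k) := by
  induction k generalizing x w with
  | zero => simpa using hx
  | succ k ih =>
    cases w with
    | nil => simpa [Function.iterate_succ_apply] using ih (w := []) ⟨Tb_mem_Ico β x, nofun⟩
    | cons d u => simpa [Function.iterate_succ_apply] using ih (mem_cyl_cons.1 hx).2.2

lemma self_eq_dig_add_Tb_div {β x : ℝ} (hβ : 0 < β) (hx : 0 ≤ x) :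
    x = (dig β x 0 + Tb β x) / β := by
  have hfloor : ((dig β x 0 : ℕ) : ℝ) = ⌊β * x⌋ := by
    rw [dig, Function.iterate_zero_apply]
    exact_mod_cast Int.toNat_of_nonneg (Int.floor_nonneg.2 (mul_nonneg hβ.le hx))
  rw [hfloor, Tb]
  field_simp
  ring

lemma floor_mul_digit_add_div {β v : ℝ} (hβ : 0 < β) (hv : v ∈ Set.Ico (0:ℝ) 1) (d : ℕ) :
    ⌊β * ((d + v) / β)⌋ = d := by
  rw [mul_div_cancel₀ _ hβ.ne', add_comm, Int.floor_add_natCast, Int.floor_eq_zero_iff.2 hv,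
    zero_add]

/-- The inverse branch of `(Tb β)^[u.length]` through the cylinder of `u`, whenever the point
lands in that cylinder. -/
noncomputable def prependDigits (β : ℝ) : List ℕ → ℝ → ℝ
  | [], t => t
  | d :: u, t => (d + prependDigits β u t) / β

lemma prependDigits_nonneg {β t : ℝ} (hβ : 0 < β) (ht : 0 ≤ t) :
    ∀ u : List ℕ, 0 ≤ prependDigits β u t
  | [] => ht
  | _ :: u => div_nonneg (add_nonneg (Nat.cast_nonneg _) (prependDigits_nonneg hβ ht u)) hβ.le

lemma prependDigits_mem_cyl {β t : ℝ} (hβ : 0 < β) (ht : 0 ≤ t) :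
    ∀ u : List ℕ, (∀ k ≤ u.length, prependDigits β (u.drop k) t < 1) →
      prependDigits β u t ∈ cyl β u ∧ (Tb β)^[u.length] (prependDigits β u t) = t
  | [], h => ⟨⟨⟨ht, h 0 le_rfl⟩, nofun⟩, rfl⟩
  | d :: u, h => by
    obtain ⟨hu, hiter⟩ := prependDigits_mem_cyl hβ ht u fun k hk => h (k + 1) (by simpa using hk)
    have hv : prependDigits β u t ∈ Set.Ico (0:ℝ) 1 := hu.1
    have hfloor := floor_mul_digit_add_div hβ hv d
    have hTb : Tb β (prependDigits β (d :: u) t) = prependDigits β u t := by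
      rw [prependDigits, Tb, hfloor, mul_div_cancel₀ _ hβ.ne']
      push_cast
      ring
    refine ⟨mem_cyl_cons.2 ⟨⟨prependDigits_nonneg hβ ht _, h 0 (Nat.zero_le _)⟩, ?_, ?_⟩, ?_⟩
    · simp [dig, prependDigits, hfloor]
    · rwa [hTb]
    · rw [List.length_cons, Function.iterate_succ_apply, hTb, hiter]

lemma full_of_forall_prependDigits_lt_one {β : ℝ} (hβ : 0 < β) {u : List ℕ}
    (h : ∀ t ∈ Set.Ico (0:ℝ) 1, ∀ k ≤ u.length, prependDigits β (u.drop k) t < 1) :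
    Full β u := by
  refine Set.Subset.antisymm ?_ fun t ht => ?_
  · rintro _ ⟨x, hx, rfl⟩
    cases hu : u.length with
    | zero => exact hx.1
    | succ n => rw [Function.iterate_succ_apply']; exact Tb_mem_Ico β _
  · obtain ⟨hcyl, hiter⟩ := prependDigits_mem_cyl hβ ht.1 u (h t ht)
    exact ⟨_, hcyl, hiter⟩

lemma prependDigits_append_lt_of_mem_cyl {β t : ℝ} (hβ : 0 < β) (ht : t < 1) {a b : ℕ}
    (hab : a < b) : ∀ (u : List ℕ) {y : ℝ}, y ∈ cyl β (u ++ [b]) →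
      prependDigits β (u ++ [a]) t < y
  | [], y, hy => by
    obtain ⟨hy01, hdig, hTb⟩ := mem_cyl_cons.1 hy
    have hab' : (a : ℝ) + 1 ≤ b := by exact_mod_cast hab
    calc prependDigits β [a] t = (a + t) / β := rfl
      _ < (b + Tb β y) / β := div_lt_div_of_pos_right (by linarith [hTb.1.1]) hβ
      _ = y := by rw [← hdig, ← self_eq_dig_add_Tb_div hβ hy01.1]
  | d :: u, y, hy => by
    obtain ⟨hy01, hdig, hTb⟩ := mem_cyl_cons.1 hy
    calc prependDigits β (d :: u ++ [a]) t = (d + prependDigits β (u ++ [a]) t) / β := rfl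
      _ < (d + Tb β y) / β := by
        gcongr; exact prependDigits_append_lt_of_mem_cyl hβ ht hab u hTb
      _ = y := by rw [← hdig, ← self_eq_dig_add_Tb_div hβ hy01.1]

theorem full_append_of_lt {β : ℝ} (hβ : 0 < β) {u : List ℕ} {a b : ℕ} (hab : a < b)
    (hu : (cyl β (u ++ [b])).Nonempty) : Full β (u ++ [a]) := by
  obtain ⟨y, hy⟩ := hu
  refine full_of_forall_prependDigits_lt_one hβ fun t ht k hk => ?_
  rcases Nat.lt_or_ge u.length k with hlt | hle
  · rw [List.drop_eq_nil_of_le (by simpa using hlt)]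
    exact ht.2
  · have hyk := iterate_mem_cyl_drop hy k
    rw [List.drop_append_of_le_length hle] at hyk ⊢
    exact (prependDigits_append_lt_of_mem_cyl hβ ht.2 hab _ hyk).trans hyk.1.2

theorem stmt5_general (β : ℝ) (hβ : 1 < β) (w : List ℕ) (hne : w ≠ []) (h : Adm β w)
    (a : ℕ) (ha : a < w.getLast hne) :
    Full β (w.dropLast ++ [a]) := by
  refine full_append_of_lt (zero_lt_one.trans hβ) ha ?_
  rw [List.dropLast_append_getLast hne]
  exact h

/-- decreasing the last nonzero digit of an admissible word gives a full word. -/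
theorem stmt5 (β : ℝ) (hβ : 1 < β) (w : List ℕ) (hne : w ≠ []) (h : Adm β w)
    (hlast : w.getLast hne ≠ 0) (a : ℕ) (ha : a < w.getLast hne) :
    Full β (w.dropLast ++ [a]) :=
  stmt5_general β hβ w hne h a ha
end

section
/- Let β > 1. Any admissible word ending with a nonempty prefix of ε(1,β) is not full. That is, if w = w₁⋯w_{n−s}ε₁⋯ε_s ∈ Σ_β^n for some 1 ≤ s ≤ n, where ε₁⋯ε_s is the prefix of the β-expansion of 1, then w is not full. -/
/-!
If `w = u ε₁⋯ε_s` and `x ∈ I(w)`, then `y = T_β^{|u|} x` has the same first `s` digits as `1`.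
Along equal digits `T_β` acts on differences as multiplication by `β`, so
`T_β^s y - T_β^s 1 = β^s (y - 1) < 0`. Hence `T_β^{|w|}` never hits the point `T_β^s 1 ∈ [0,1)`
on `I(w)`, and `w` is not full.
-/

lemma Tb_mem (β x : ℝ) : Tb β x ∈ Set.Ico (0 : ℝ) 1 :=
  ⟨Int.fract_nonneg (β * x), Int.fract_lt_one (β * x)⟩

lemma iterate_Tb_mem_of_pos (β x : ℝ) {m : ℕ} (hm : 0 < m) :
    (Tb β)^[m] x ∈ Set.Ico (0 : ℝ) 1 := by
  obtain ⟨k, rfl⟩ := Nat.exists_eq_add_of_lt hm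
  rw [Nat.zero_add, Function.iterate_succ_apply']
  exact Tb_mem β _

lemma iterate_Tb_mem (β : ℝ) {x : ℝ} (hx : x ∈ Set.Ico (0 : ℝ) 1) (m : ℕ) :
    (Tb β)^[m] x ∈ Set.Ico (0 : ℝ) 1 := by
  rcases m.eq_zero_or_pos with rfl | hm
  · exact hx
  · exact iterate_Tb_mem_of_pos β x hm

lemma iterate_Tb_nonneg (β : ℝ) {x : ℝ} (hx : 0 ≤ x) (m : ℕ) : 0 ≤ (Tb β)^[m] x := by
  rcases m.eq_zero_or_pos with rfl | hm
  · exact hx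
  · exact (iterate_Tb_mem_of_pos β x hm).1

lemma dig_add (β x : ℝ) (m i : ℕ) : dig β x (m + i) = dig β ((Tb β)^[m] x) i := by
  rw [dig, dig, add_comm, Function.iterate_add_apply]

lemma Tb_sub_Tb {β a b : ℝ} (h : ⌊β * a⌋ = ⌊β * b⌋) : Tb β a - Tb β b = β * (a - b) := by
  simp only [Tb, h]
  ring

/-- Equal digits mean equal integer parts, which cancel in the difference. -/
lemma iterate_Tb_sub_iterate_Tb {β y z : ℝ} (hβ : 0 ≤ β) (hy : 0 ≤ y) (hz : 0 ≤ z) {j : ℕ}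
    (hd : ∀ i < j, dig β y i = dig β z i) :
    (Tb β)^[j] y - (Tb β)^[j] z = β ^ j * (y - z) := by
  induction j with
  | zero => simp
  | succ j ih =>
    have hfloor : ⌊β * (Tb β)^[j] y⌋ = ⌊β * (Tb β)^[j] z⌋ := by
      have hy' := Int.floor_nonneg.2 (mul_nonneg hβ (iterate_Tb_nonneg β hy j))
      have hz' := Int.floor_nonneg.2 (mul_nonneg hβ (iterate_Tb_nonneg β hz j))
      have hdj := hd j j.lt_succ_self
      simp only [dig] at hdj
      omega
    rw [Function.iterate_succ_apply', Function.iterate_succ_apply', Tb_sub_Tb hfloor,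
      ih fun i hi => hd i (Nat.lt_succ_of_lt hi), pow_succ]
    ring

lemma dig_iterate_of_mem_cyl_append {β x : ℝ} {u v : List ℕ} (hx : x ∈ cyl β (u ++ v))
    {i : ℕ} (hi : i < v.length) : dig β ((Tb β)^[u.length] x) i = v[i] := by
  have hlt : u.length + i < (u ++ v).length := by simp [hi]
  rw [← dig_add, ← hx.2 _ hlt, List.getElem_append_right (by omega)]
  simp

theorem stmt8_general (β : ℝ) (hβ : 1 < β) (w u : List ℕ) (s : ℕ) (hs : 1 ≤ s)
    (hdec : w = u ++ List.ofFn (fun i : Fin s => dig β 1 i)) :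
    ¬ Full β w := by
  intro hfull
  have hβ0 : 0 < β := one_pos.trans hβ
  have hmem : (Tb β)^[s] 1 ∈ (Tb β)^[w.length] '' cyl β w := by
    rw [hfull]
    exact iterate_Tb_mem_of_pos β 1 hs
  obtain ⟨x, hx, hxs⟩ := hmem
  subst hdec
  set y := (Tb β)^[u.length] x
  have hy : y ∈ Set.Ico (0 : ℝ) 1 := iterate_Tb_mem β hx.1 u.length
  have hd : ∀ i < s, dig β y i = dig β 1 i := fun i hi => by
    rw [dig_iterate_of_mem_cyl_append hx (by simpa using hi), List.getElem_ofFn]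
  have hys : (Tb β)^[s] y = (Tb β)^[s] 1 := by
    rw [← hxs, List.length_append, List.length_ofFn, add_comm, Function.iterate_add_apply]
  have hshift := iterate_Tb_sub_iterate_Tb hβ0.le hy.1 zero_le_one hd
  rw [hys, sub_self] at hshift
  have hpow : 0 < β ^ s := pow_pos hβ0 s
  nlinarith [hy.2]

/-- an admissible word ending with a nonempty prefix of ε(1,β) is not full. -/
theorem stmt8 (β : ℝ) (hβ : 1 < β) (w u : List ℕ) (s : ℕ) (hs : 1 ≤ s)
    (hdec : w = u ++ List.ofFn (fun i : Fin s => dig β 1 i)) (h : Adm β w) :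
    ¬ Full β w :=
  stmt8_general β hβ w u s hs hdec
end
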